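/- Let m be a positive integer and let x be a real number with −π/2 < x < π/2. Then ∑_{n=1}^∞ (-1)^{n-1} cos((2n-1)x)/(2n-1)^{2m} = ((-1)^{m-1} (2π)^{2m-1}/(2·(2m-1)!)) · ( ζ'(1-2m, 1/4 − x/(2π)) − ζ'(1-2m, 3/4 − x/(2π)) + ζ'(1-2m, 1/4 + x/(2π)) − ζ'(1-2m, 3/4 + x/(2π)) ). -/

import Mathlib

open Filter Topology Finset Real

noncomputable def hzeta (s : ℂ) (a : ℝ) : ℂ :=
  HurwitzZeta.hurwitzZeta (a : UnitAddCircle) s -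
    ∑ j ∈ Finset.range (⌈a⌉₊ - 1), ((a : ℂ) - ((⌈a⌉₊ : ℂ) - 1) + j) ^ (-s)

/-!
Put `a = 1/4 - x/(2π)` and `b = 1/4 + x/(2π)`. On the unit circle the four parameters are
`a, -b, b, -a`, so the bracket is `2 (ζ_odd'(1-2m, a) + ζ_odd'(1-2m, b))`, where `ζ_odd(s, a)`
is the odd part `(ζ(s, a) - ζ(s, -a))/2`. The functional equation
`ζ_odd(1-s, a) = 2 (2π)^(-s) Γ(s) sin(πs/2) S(s, a)`, with `S(s, a) = ∑ sin(2πan)/n^s`, has a sine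
factor vanishing at `s = 2m`, so the derivative there is a multiple of `S(2m, a)`. Finally
`S(s, a) + S(s, b) = ∑ 2 sin(nπ/2) cos(nx)/n^s`, in which only odd `n = 2k+1` survive, with
sign `(-1)^k`.
-/

open HurwitzZeta Complex

lemma hzeta_eq_hurwitzZeta {a : ℝ} (h0 : 0 < a) (h1 : a ≤ 1) :
    (fun s => hzeta s a) = hurwitzZeta (a : UnitAddCircle) := by
  funext s
  rw [hzeta, show ⌈a⌉₊ = 1 from (Nat.ceil_eq_iff one_ne_zero).mpr (by simpa using ⟨h0, h1⟩)]
  simp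

lemma UnitAddCircle.coe_one_sub (a : ℝ) : ((1 - a : ℝ) : UnitAddCircle) = -(a : UnitAddCircle) := by
  rw [AddCircle.coe_sub, AddCircle.coe_period, zero_sub]

lemma deriv_hurwitzZeta_sub_deriv_hurwitzZeta_neg (a : UnitAddCircle) {s : ℂ} (hs : s ≠ 1) :
    deriv (hurwitzZeta a) s - deriv (hurwitzZeta (-a)) s = 2 * deriv (hurwitzZetaOdd a) s := by
  have hodd : hurwitzZetaOdd a = fun w => (hurwitzZeta a w - hurwitzZeta (-a) w) / 2 :=
    funext (hurwitzZetaOdd_eq a)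
  rw [hodd, deriv_div_const, deriv_fun_sub (differentiableAt_hurwitzZeta a hs)
    (differentiableAt_hurwitzZeta (-a) hs)]
  ring

lemma HasDerivAt.fun_mul_of_eq_zero {𝕜 𝔸 : Type*} [NontriviallyNormedField 𝕜] [NormedRing 𝔸]
    [NormedAlgebra 𝕜 𝔸] {f g : 𝕜 → 𝔸} {f' g' : 𝔸} {x : 𝕜} (hf : HasDerivAt f f' x)
    (hg : HasDerivAt g g' x) (hg0 : g x = 0) : HasDerivAt (fun y => f y * g y) (f x * g') x := by
  simpa [hg0] using hf.fun_mul hg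

lemma ne_neg_natCast_of_re_pos {s : ℂ} (hs : 0 < s.re) (n : ℕ) : s ≠ -n := by
  rintro rfl
  simp only [neg_re, natCast_re, Left.neg_pos_iff] at hs
  exact (Nat.cast_nonneg n).not_gt hs

lemma hasDerivAt_hurwitzZetaOdd_one_sub_two_mul (a : UnitAddCircle) {m : ℕ} (hm : 0 < m) :
    HasDerivAt (hurwitzZetaOdd a) ((-1) ^ (m + 1) * π * Complex.Gamma (2 * m) /
      (2 * π) ^ (2 * m) * sinZeta a (2 * m)) (1 - 2 * m) := by
  set F : ℂ → ℂ := fun s => 2 * (2 * π) ^ (-s) * Complex.Gamma s * sinZeta a s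
  have hpos : ∀ᶠ s : ℂ in 𝓝 (2 * m : ℂ), 0 < s.re :=
    continuousAt_const.eventually_lt continuous_re.continuousAt (by simpa using hm)
  have hfe : (fun s => F s * Complex.sin (π * s / 2)) =ᶠ[𝓝 (2 * m : ℂ)]
      fun s => hurwitzZetaOdd a (1 - s) := by
    filter_upwards [hpos] with s hs
    rw [hurwitzZetaOdd_one_sub a (ne_neg_natCast_of_re_pos hs)]
    ring
  have hF : DifferentiableAt ℂ F (2 * m) := by
    have hΓ : DifferentiableAt ℂ Complex.Gamma (2 * m) := Complex.differentiableAt_Gamma _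
      (ne_neg_natCast_of_re_pos hpos.self_of_nhds)
    have h2π : (2 * π : ℂ) ≠ 0 := by simp [pi_ne_zero]
    exact ((differentiableAt_neg_iff.mpr differentiableAt_id).const_cpow (.inl h2π)
      |>.const_mul 2 |>.mul hΓ).mul (differentiableAt_sinZeta a _)
  have hmul : (π : ℂ) * (2 * m) / 2 = ((m * π : ℝ) : ℂ) := by push_cast; ring
  have hsin : HasDerivAt (fun s : ℂ => Complex.sin (π * s / 2)) ((-1) ^ m * (π / 2)) (2 * m) := by
    have := (((hasDerivAt_id (2 * m : ℂ)).const_mul (π : ℂ)).div_const 2).csin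
    rw [id, hmul, ← ofReal_cos, Real.cos_nat_mul_pi] at this
    simpa using this
  have hodd : HasDerivAt (fun s => hurwitzZetaOdd a (1 - s))
      (F (2 * m) * ((-1) ^ m * (π / 2))) (1 - (1 - 2 * m)) := by
    rw [sub_sub_cancel]
    refine (hF.hasDerivAt.fun_mul_of_eq_zero hsin ?_).congr_of_eventuallyEq hfe.symm
    rw [hmul, ← ofReal_sin, Real.sin_nat_mul_pi, ofReal_zero]
  have := hodd.comp_const_sub 1 (1 - 2 * (m : ℂ))
  simp only [sub_sub_cancel] at this
  refine this.congr_deriv ?_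
  have hpow : (2 * π : ℂ) ^ (-(2 * m : ℂ)) = ((2 * π : ℂ) ^ (2 * m))⁻¹ := by
    rw [cpow_neg, ← cpow_natCast]
    push_cast
    rfl
  simp only [F, hpow]
  ring

lemma HasSum.comp_two_mul_add_one {α : Type*} [AddCommMonoid α] [TopologicalSpace α]
    {f : ℕ → α} {a : α} (hf : HasSum f a) (heven : ∀ k, f (2 * k) = 0) :
    HasSum (fun k => f (2 * k + 1)) a := by
  refine (Function.Injective.hasSum_iff (f := f) (fun i j h => by simpa using h) ?_).mpr hf
  rintro n hn
  obtain ⟨k, rfl⟩ : Even n := Nat.not_odd_iff_even.mp fun ⟨k, hk⟩ => hn ⟨k, hk.symm⟩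
  simpa [two_mul] using heven k

lemma hasSum_neg_one_pow_mul_cos_div_cpow (x : ℝ) {s : ℂ} (hs : 1 < s.re) :
    HasSum (fun n : ℕ => (-1) ^ n * (Real.cos ((2 * n + 1) * x) : ℂ) / (2 * (n : ℂ) + 1) ^ s)
      ((sinZeta ↑(1 / 4 - x / (2 * π)) s + sinZeta ↑(1 / 4 + x / (2 * π)) s) / 2) := by
  have hsin_add_sin (n : ℕ) : Real.sin (2 * π * (1 / 4 - x / (2 * π)) * n) +
      Real.sin (2 * π * (1 / 4 + x / (2 * π)) * n) =
        2 * Real.sin (n * π / 2) * Real.cos (n * x) := by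
    rw [Real.sin_add_sin, ← Real.cos_neg]
    congr 3 <;> field_simp <;> ring
  have hsum := ((hasSum_nat_sinZeta (1 / 4 - x / (2 * π)) hs).add
    (hasSum_nat_sinZeta (1 / 4 + x / (2 * π)) hs)).div_const 2
  simp only [← add_div, ← ofReal_add, hsin_add_sin] at hsum
  refine (hsum.comp_two_mul_add_one fun k => ?_).congr_fun fun k => ?_
  · rw [show ((2 * k : ℕ) : ℝ) * π / 2 = k * π by push_cast; ring, Real.sin_nat_mul_pi]
    simp
  · rw [show ((2 * k + 1 : ℕ) : ℝ) * π / 2 = k * π + π / 2 by push_cast; ring,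
      Real.sin_add_pi_div_two, Real.cos_nat_mul_pi]
    push_cast
    ring

-- The prefactor of the theorem against twice the coefficient in
-- `hasDerivAt_hurwitzZetaOdd_one_sub_two_mul`.
lemma closedForm_prefactor_mul_eq_half {m : ℕ} (hm : 0 < m) :
    (-1) ^ (m - 1) * (2 * π : ℂ) ^ (2 * m - 1) / (2 * (Nat.factorial (2 * m - 1)) : ℂ) *
      (2 * ((-1) ^ (m + 1) * π * Complex.Gamma (2 * m) / (2 * π) ^ (2 * m))) = 1 / 2 := by
  obtain ⟨k, rfl⟩ : ∃ k, m = k + 1 := ⟨m - 1, by omega⟩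
  have hΓ : Complex.Gamma (2 * (k + 1 : ℕ)) = Nat.factorial (2 * k + 1) := by
    rw [← Complex.Gamma_nat_eq_factorial]
    push_cast
    ring_nf
  rw [hΓ, show 2 * (k + 1) - 1 = 2 * k + 1 by omega, Nat.add_sub_cancel]
  have hfac : (Nat.factorial (2 * k + 1) : ℂ) ≠ 0 := Nat.cast_ne_zero.mpr (Nat.factorial_ne_zero _)
  have hsign : ((-1 : ℂ) ^ k) ^ 2 = 1 := by rw [← pow_mul, pow_mul', neg_one_sq, one_pow]
  field_simp
  linear_combination (2 * π : ℂ) ^ (2 * k + 2) * hsign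

theorem alt_odd_cos_series_even_exponent_closed_form (m : ℕ) (hm : 0 < m)
    (x : ℝ) (hx0 : -(π / 2) < x) (hx1 : x < π / 2) :
    Filter.Tendsto
      (fun N : ℕ => ∑ n ∈ Finset.range N,
        (-1) ^ n * (Real.cos ((2 * n + 1) * x) : ℂ) / (2 * (n : ℂ) + 1) ^ (2 * m))
      Filter.atTop
      (𝓝 ((-1) ^ (m - 1) * (2 * (π : ℂ)) ^ (2 * m - 1) / (2 * (Nat.factorial (2 * m - 1) : ℂ)) *
        (deriv (fun s => hzeta s (1 / 4 - x / (2 * π))) (1 - 2 * (m : ℂ)) -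
          deriv (fun s => hzeta s (3 / 4 - x / (2 * π))) (1 - 2 * (m : ℂ)) +
          deriv (fun s => hzeta s (1 / 4 + x / (2 * π))) (1 - 2 * (m : ℂ)) -
          deriv (fun s => hzeta s (3 / 4 + x / (2 * π))) (1 - 2 * (m : ℂ))))) := by
  have ht0 : -(1 / 4) < x / (2 * π) := by rw [lt_div_iff₀ two_pi_pos]; linarith
  have ht1 : x / (2 * π) < 1 / 4 := by rw [div_lt_iff₀ two_pi_pos]; linarith
  rw [hzeta_eq_hurwitzZeta (by linarith) (by linarith),
    hzeta_eq_hurwitzZeta (by linarith) (by linarith),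
    hzeta_eq_hurwitzZeta (by linarith) (by linarith),
    hzeta_eq_hurwitzZeta (by linarith) (by linarith),
    show 3 / 4 - x / (2 * π) = 1 - (1 / 4 + x / (2 * π)) by ring,
    show 3 / 4 + x / (2 * π) = 1 - (1 / 4 - x / (2 * π)) by ring,
    UnitAddCircle.coe_one_sub, UnitAddCircle.coe_one_sub]
  set a : UnitAddCircle := ↑(1 / 4 - x / (2 * π))
  set b : UnitAddCircle := ↑(1 / 4 + x / (2 * π))
  have hs : 1 - 2 * (m : ℂ) ≠ 1 := by simp [hm.ne']
  have hre : 1 < (2 * m : ℂ).re := by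
    simp only [mul_re, re_ofNat, natCast_re, im_ofNat, natCast_im, mul_zero, sub_zero]
    exact_mod_cast (by omega : 1 < 2 * m)
  rw [show ∀ p q r u : ℂ, p - q + r - u = (p - u) + (r - q) by intros; ring,
    deriv_hurwitzZeta_sub_deriv_hurwitzZeta_neg a hs,
    deriv_hurwitzZeta_sub_deriv_hurwitzZeta_neg b hs,
    (hasDerivAt_hurwitzZetaOdd_one_sub_two_mul a hm).deriv,
    (hasDerivAt_hurwitzZetaOdd_one_sub_two_mul b hm).deriv]
  convert (hasSum_neg_one_pow_mul_cos_div_cpow x hre).tendsto_sum_nat using 1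
  · congr! 4 with N n
    rw [← cpow_natCast, Nat.cast_mul, Nat.cast_ofNat]
  · congr 1
    linear_combination (sinZeta a (2 * m) + sinZeta b (2 * m)) * closedForm_prefactor_mul_eq_half hm
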